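/- arXiv:1704.08086 — 5 statements merged into one kernel-verified Lean document; each statement's English description precedes it below -/
import Mathlib

section
/- In a monoidal category, let s : S ↪ I and t : T ↪ I be idempotent subunits. Then s factors through t (i.e., s = t ∘ f for some morphism f : S → T) if and only if id_S ⊗ t : S ⊗ T → S ⊗ I is an isomorphism. -/
open CategoryTheory MonoidalCategory

/-!
If `s = f ≫ t`, then `S ◁ s = S ◁ f ≫ S ◁ t` is invertible, so `S ◁ t` has a right inverse `h`.
To see that `h` is also a left inverse, whisker on the right by `T`: `(S ◁ t) ▷ T` is invertible
because `t ▷ T` is, and `- ▷ T` is faithful on maps out of `S ⊗ T` since `(S ⊗ T) ◁ t` is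
invertible. Conversely, if `S ◁ t` is invertible, `s` factors as
`S ≅ S ⊗ 𝟙_ ≅ S ⊗ T ⟶ 𝟙_ ⊗ T ≅ T ⟶ 𝟙_`, the middle map being `s ▷ T`.
-/

namespace CategoryTheory.MonoidalCategory

variable {C : Type*} [Category C] [MonoidalCategory C]

lemma whiskerRight_self_comp_leftUnitor {S : C} (s : S ⟶ 𝟙_ C) [Mono s] :
    s ▷ S ≫ (λ_ S).hom = S ◁ s ≫ (ρ_ S).hom := by
  rw [← cancel_mono s, Category.assoc, Category.assoc, ← leftUnitor_naturality,
    ← rightUnitor_naturality, ← whisker_exchange_assoc, unitors_equal]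

lemma isIso_whiskerLeft_self {S : C} (s : S ⟶ 𝟙_ C) [Mono s] [IsIso (s ▷ S)] :
    IsIso (S ◁ s) := by
  have h : S ◁ s = s ▷ S ≫ (λ_ S).hom ≫ (ρ_ S).inv := by
    rw [← Category.assoc, whiskerRight_self_comp_leftUnitor, Category.assoc, Iso.hom_inv_id,
      Category.comp_id]
  rw [h]
  infer_instance

lemma eq_of_whiskerRight_eq {T X Y : C} (t : T ⟶ 𝟙_ C) [IsIso (X ◁ t)] {a b : X ⟶ Y}
    (h : a ▷ T = b ▷ T) : a = b := by
  have h' : a ▷ 𝟙_ C = b ▷ 𝟙_ C := by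
    rw [← cancel_epi (X ◁ t), whisker_exchange, whisker_exchange, h]
  simpa using h'

lemma isIso_whiskerLeft_of_factor {S T : C} (s : S ⟶ 𝟙_ C) (t : T ⟶ 𝟙_ C) [Mono s] [Mono t]
    [IsIso (s ▷ S)] [IsIso (t ▷ T)] (f : S ⟶ T) (hf : s = f ≫ t) : IsIso (S ◁ t) := by
  have := isIso_whiskerLeft_self s
  have := isIso_whiskerLeft_self t
  have hST : IsIso ((S ⊗ T) ◁ t) := by rw [tensor_whiskerLeft]; infer_instance
  have htT : IsIso ((S ◁ t) ▷ T) := by rw [whisker_assoc]; infer_instance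
  set h := inv (S ◁ s) ≫ S ◁ f
  have hh : h ≫ S ◁ t = 𝟙 _ := by
    rw [Category.assoc, ← whiskerLeft_comp, ← hf, IsIso.inv_hom_id]
  refine ⟨h, eq_of_whiskerRight_eq t ?_, hh⟩
  rw [← cancel_mono ((S ◁ t) ▷ T), ← comp_whiskerRight, Category.assoc, hh, Category.comp_id,
    id_whiskerRight, Category.id_comp]

lemma exists_factor_of_isIso_whiskerLeft {S T : C} (s : S ⟶ 𝟙_ C) (t : T ⟶ 𝟙_ C)
    [IsIso (S ◁ t)] : ∃ f : S ⟶ T, s = f ≫ t := by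
  refine ⟨(ρ_ S).inv ≫ inv (S ◁ t) ≫ s ▷ T ≫ (λ_ T).hom, ?_⟩
  simp only [Category.assoc]
  rw [← leftUnitor_naturality, ← whisker_exchange_assoc, IsIso.inv_hom_id_assoc, unitors_equal,
    rightUnitor_naturality, Iso.inv_hom_id_assoc]

end CategoryTheory.MonoidalCategory

/-- Proposition 4: an idempotent subunit `s` factors through an idempotent subunit `t`
iff `id_S ⊗ t` is an isomorphism. -/
theorem stmt1 {C : Type*} [Category C] [MonoidalCategory C]
    {S T : C} (s : S ⟶ 𝟙_ C) (t : T ⟶ 𝟙_ C) [Mono s] [Mono t]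
    (hs : IsIso (s ⊗ₘ 𝟙 S)) (ht : IsIso (t ⊗ₘ 𝟙 T)) :
    (∃ f : S ⟶ T, s = f ≫ t) ↔ IsIso (𝟙 S ⊗ₘ t) := by
  rw [tensorHom_id] at hs ht
  rw [id_tensorHom]
  exact ⟨fun ⟨f, hf⟩ => isIso_whiskerLeft_of_factor s t f hf,
    fun _ => exists_factor_of_isIso_whiskerLeft s t⟩
end

section
/- If s, s' : S ↪ I are two idempotent subunits with the same domain S in a monoidal category, then there exists a unique morphism f : S → S with s' = s ∘ f, and this f is an isomorphism. -/
/-!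
For `t, u : S ⟶ 𝟙_ C`, both `t ▷ S ≫ λ ≫ u` and `S ◁ u ≫ ρ ≫ t` are `t ⊗ u` followed by the
unitor of `𝟙_ C`. Taking `t = u = s` and cancelling the mono `s` identifies `s ▷ S ≫ λ` with
`S ◁ s ≫ ρ`; taking `t = s'`, `u = s` then shows `s' ▷ S ≫ λ ≫ s = s ▷ S ≫ λ ≫ s'`. So when
`s ▷ S` is invertible, `s'` factors through `s` via `λ⁻¹ ≫ (s ▷ S)⁻¹ ≫ s' ▷ S ≫ λ`, which is an
isomorphism as soon as `s' ▷ S` is one; the factorisation is unique because `s` is mono.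
-/

open CategoryTheory MonoidalCategory

namespace CategoryTheory.MonoidalCategory

variable {C : Type*} [Category C] [MonoidalCategory C] {S : C}

lemma whiskerRight_leftUnitor_hom_comp (t u : S ⟶ 𝟙_ C) :
    t ▷ S ≫ (λ_ S).hom ≫ u = S ◁ u ≫ (ρ_ S).hom ≫ t := by
  rw [← leftUnitor_naturality, ← rightUnitor_naturality, ← unitors_equal,
    whisker_exchange_assoc]

lemma whiskerRight_leftUnitor_hom_of_mono (s : S ⟶ 𝟙_ C) [Mono s] :
    s ▷ S ≫ (λ_ S).hom = S ◁ s ≫ (ρ_ S).hom := by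
  simpa only [← cancel_mono s, Category.assoc] using whiskerRight_leftUnitor_hom_comp s s

noncomputable def subunitLift (s t : S ⟶ 𝟙_ C) [IsIso (s ▷ S)] : S ⟶ S :=
  (λ_ S).inv ≫ inv (s ▷ S) ≫ t ▷ S ≫ (λ_ S).hom

lemma subunitLift_comp (s t : S ⟶ 𝟙_ C) [Mono s] [IsIso (s ▷ S)] :
    subunitLift s t ≫ s = t := by
  have exchange : t ▷ S ≫ (λ_ S).hom ≫ s = s ▷ S ≫ (λ_ S).hom ≫ t := by
    rw [whiskerRight_leftUnitor_hom_comp, ← Category.assoc,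
      ← whiskerRight_leftUnitor_hom_of_mono, Category.assoc]
  simp [subunitLift, exchange]

instance (s t : S ⟶ 𝟙_ C) [IsIso (s ▷ S)] [IsIso (t ▷ S)] : IsIso (subunitLift s t) := by
  unfold subunitLift
  infer_instance

end CategoryTheory.MonoidalCategory

theorem stmt2_general {C : Type*} [Category C] [MonoidalCategory C]
    {S : C} (s s' : S ⟶ 𝟙_ C) [Mono s]
    (hs : IsIso (s ⊗ₘ 𝟙 S)) (hs' : IsIso (s' ⊗ₘ 𝟙 S)) :
    ∃ f : S ⟶ S, s' = f ≫ s ∧ IsIso f ∧ ∀ g : S ⟶ S, s' = g ≫ s → g = f := by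
  rw [tensorHom_id] at hs hs'
  refine ⟨subunitLift s s', (subunitLift_comp s s').symm, inferInstance, fun g hg => ?_⟩
  rw [← cancel_mono s, ← hg, subunitLift_comp]

/-- Corollary 5: two idempotent subunits with the same domain differ by a unique
morphism, which is an isomorphism. -/
theorem stmt2 {C : Type*} [Category C] [MonoidalCategory C]
    {S : C} (s s' : S ⟶ 𝟙_ C) [Mono s] [Mono s']
    (hs : IsIso (s ⊗ₘ 𝟙 S)) (hs' : IsIso (s' ⊗ₘ 𝟙 S)) :
    ∃ f : S ⟶ S, s' = f ≫ s ∧ IsIso f ∧ ∀ g : S ⟶ S, s' = g ≫ s → g = f :=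
  stmt2_general s s' hs hs'
end

section
/- In a firm braided monoidal category, given idempotent subunits s : S ↪ I and t : T ↪ I, the composite λ_I ∘ (s ⊗ t) : S ⊗ T → I is again a monomorphism, and it is an idempotent subunit. -/
open CategoryTheory MonoidalCategory

/-!
Factor `s ⊗ t = (s ▷ T) ≫ (I ◁ t)`: the first factor is monic by firmness and the second is `t`
up to unitors, so `s ⊗ t` is monic. For idempotence, the middle-four interchange `tensorμ` is an
isomorphism, natural in all four variables, which conjugates `(s ⊗ t) ▷ (S ⊗ T)` into
`(s ▷ S) ⊗ (t ▷ T)`, a tensor product of isomorphisms.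
-/

/-- A braided monoidal category is *firm* when `s ⊗ id_T` is monic for all idempotent
subunits `s : S ↪ I` and `t : T ↪ I`. -/
def Firm (C : Type*) [Category C] [MonoidalCategory C] [BraidedCategory C] : Prop :=
  ∀ {S T : C} (s : S ⟶ 𝟙_ C) (t : T ⟶ 𝟙_ C), Mono s → Mono t →
    IsIso (s ⊗ₘ 𝟙 S) → IsIso (t ⊗ₘ 𝟙 T) → Mono (s ⊗ₘ 𝟙 T)

namespace CategoryTheory.MonoidalCategory

variable {C : Type*} [Category C] [MonoidalCategory C]

instance mono_unit_whiskerLeft {X Y : C} (f : X ⟶ Y) [Mono f] : Mono (𝟙_ C ◁ f) := by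
  rw [id_whiskerLeft]
  infer_instance

lemma mono_tensorHom {X₁ X₂ Y₁ Y₂ : C} (f : X₁ ⟶ Y₁) (g : X₂ ⟶ Y₂) [Mono (f ▷ X₂)]
    [Mono (Y₁ ◁ g)] : Mono (f ⊗ₘ g) := by
  rw [tensorHom_def]
  infer_instance

variable [BraidedCategory C]

instance isIso_tensorμ (X₁ X₂ Y₁ Y₂ : C) : IsIso (tensorμ X₁ X₂ Y₁ Y₂) :=
  ⟨tensorδ X₁ X₂ Y₁ Y₂, tensorμ_tensorδ X₁ X₂ Y₁ Y₂, tensorδ_tensorμ X₁ X₂ Y₁ Y₂⟩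

lemma isIso_tensorHom_whiskerRight {X₁ X₂ Y₁ Y₂ : C} (f₁ : X₁ ⟶ Y₁) (f₂ : X₂ ⟶ Y₂) (Z₁ Z₂ : C)
    [IsIso (f₁ ▷ Z₁)] [IsIso (f₂ ▷ Z₂)] : IsIso ((f₁ ⊗ₘ f₂) ▷ (Z₁ ⊗ Z₂)) := by
  have : IsIso ((f₁ ⊗ₘ f₂) ▷ (Z₁ ⊗ Z₂) ≫ tensorμ Y₁ Y₂ Z₁ Z₂) := by
    rw [tensorμ_natural_left]
    infer_instance
  exact IsIso.of_isIso_comp_right _ (tensorμ Y₁ Y₂ Z₁ Z₂)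

end CategoryTheory.MonoidalCategory

/-- In a firm braided monoidal category, the product `λ_I ∘ (s ⊗ t)` of two idempotent
subunits is again a monomorphism and an idempotent subunit. -/
theorem stmt3 {C : Type*} [Category C] [MonoidalCategory C] [BraidedCategory C]
    (firm : Firm C) {S T : C} (s : S ⟶ 𝟙_ C) (t : T ⟶ 𝟙_ C) [Mono s] [Mono t]
    (hs : IsIso (s ⊗ₘ 𝟙 S)) (ht : IsIso (t ⊗ₘ 𝟙 T)) :
    Mono ((s ⊗ₘ t) ≫ (λ_ (𝟙_ C)).hom) ∧
      IsIso (((s ⊗ₘ t) ≫ (λ_ (𝟙_ C)).hom) ⊗ₘ 𝟙 (S ⊗ T)) := by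
  have : Mono (s ▷ T) := by simpa only [tensorHom_id] using firm s t ‹_› ‹_› hs ht
  rw [tensorHom_id] at hs ht ⊢
  constructor
  · have := mono_tensorHom s t
    infer_instance
  · rw [comp_whiskerRight]
    have := isIso_tensorHom_whiskerRight s t S T
    infer_instance
end

section
/- In a firm braided monoidal category, the idempotent subunits (as subobjects of the tensor unit) form an idempotent commutative monoid under the operation sending (s : S ↪ I, t : T ↪ I) to λ_I ∘ (s ⊗ t) : S ⊗ T → I, with unit the identity id_I. -/
open CategoryTheory MonoidalCategory

/-- `s : S ↪ I` is an idempotent subunit. -/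
def IsIdemSubunit {C : Type*} [Category C] [MonoidalCategory C] {S : C}
    (s : S ⟶ 𝟙_ C) : Prop :=
  Mono s ∧ IsIso (s ⊗ₘ 𝟙 S)

/-- Two (mono)morphisms into `I` represent the same subobject of `I`. -/
def SameSub {C : Type*} [Category C] [MonoidalCategory C] {S T : C}
    (s : S ⟶ 𝟙_ C) (t : T ⟶ 𝟙_ C) : Prop :=
  (∃ f : S ⟶ T, s = f ≫ t) ∧ (∃ g : T ⟶ S, t = g ≫ s)

/-- The product of idempotent subunits `s, t`: `λ_I ∘ (s ⊗ t) : S ⊗ T → I`. -/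
def subunitMul {C : Type*} [Category C] [MonoidalCategory C] {S T : C}
    (s : S ⟶ 𝟙_ C) (t : T ⟶ 𝟙_ C) : S ⊗ T ⟶ 𝟙_ C :=
  (s ⊗ₘ t) ≫ (λ_ (𝟙_ C)).hom

/-!
Every law holds on the nose up to a structural isomorphism of the domains (unitor, associator,
braiding, or `s ▷ S` for idempotence), which already makes the two sides the same subobject.
Only closure needs more: `subunitMul s t ▷ (S ⊗ T)` is, up to the middle-four interchange
`tensorμ`, the tensor product of the isomorphisms `s ▷ S` and `t ▷ T`, and `subunitMul s t`
factors as `s ▷ T` followed by a monomorphism, where firmness makes `s ▷ T` monic.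
-/

section Monoidal

variable {C : Type*} [Category C] [MonoidalCategory C]

lemma sameSub_of_iso {S T : C} {s : S ⟶ 𝟙_ C} {t : T ⟶ 𝟙_ C} (e : S ≅ T) (h : s = e.hom ≫ t) :
    SameSub s t :=
  ⟨⟨e.hom, h⟩, ⟨e.inv, by rw [h, e.inv_hom_id_assoc]⟩⟩

lemma subunitMul_eq_whiskerRight {S T : C} (s : S ⟶ 𝟙_ C) (t : T ⟶ 𝟙_ C) :
    subunitMul s t = s ▷ T ≫ (λ_ T).hom ≫ t := by
  rw [subunitMul, MonoidalCategory.tensorHom_def, Category.assoc, leftUnitor_naturality]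

lemma subunitMul_eq_whiskerLeft {S T : C} (s : S ⟶ 𝟙_ C) (t : T ⟶ 𝟙_ C) :
    subunitMul s t = S ◁ t ≫ (ρ_ S).hom ≫ s := by
  rw [subunitMul, MonoidalCategory.tensorHom_def', Category.assoc, unitors_equal,
    rightUnitor_naturality]

lemma id_subunitMul {S : C} (s : S ⟶ 𝟙_ C) : subunitMul (𝟙 (𝟙_ C)) s = (λ_ S).hom ≫ s := by
  rw [subunitMul_eq_whiskerRight, id_whiskerRight, Category.id_comp]

lemma subunitMul_id {S : C} (s : S ⟶ 𝟙_ C) : subunitMul s (𝟙 (𝟙_ C)) = (ρ_ S).hom ≫ s := by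
  rw [subunitMul_eq_whiskerLeft, whiskerLeft_id, Category.id_comp]

lemma subunitMul_assoc {S T U : C} (s : S ⟶ 𝟙_ C) (t : T ⟶ 𝟙_ C) (u : U ⟶ 𝟙_ C) :
    subunitMul (subunitMul s t) u = (α_ S T U).hom ≫ subunitMul s (subunitMul t u) := by
  simp only [subunitMul]
  monoidal

lemma sameSub_subunitMul_self {S : C} (s : S ⟶ 𝟙_ C) (hs : IsIso (s ⊗ₘ 𝟙 S)) :
    SameSub (subunitMul s s) s := by
  rw [tensorHom_id] at hs
  refine sameSub_of_iso (asIso (s ▷ S) ≪≫ λ_ S) ?_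
  rw [Iso.trans_hom, asIso_hom, Category.assoc]
  exact subunitMul_eq_whiskerRight s s

lemma isIdemSubunit_id : IsIdemSubunit (𝟙 (𝟙_ C)) := by
  refine ⟨inferInstance, ?_⟩
  rw [id_tensorHom_id]
  infer_instance

end Monoidal

section Braided

variable {C : Type*} [Category C] [MonoidalCategory C] [BraidedCategory C]

instance isIso_tensorμ (X₁ X₂ Y₁ Y₂ : C) : IsIso (tensorμ X₁ X₂ Y₁ Y₂) :=
  ⟨tensorδ X₁ X₂ Y₁ Y₂, tensorμ_tensorδ _ _ _ _, tensorδ_tensorμ _ _ _ _⟩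

lemma isIso_tensorHom_tensorHom {X₁ X₂ Y₁ Y₂ U₁ U₂ V₁ V₂ : C} (f₁ : X₁ ⟶ Y₁) (f₂ : X₂ ⟶ Y₂)
    (g₁ : U₁ ⟶ V₁) (g₂ : U₂ ⟶ V₂) [IsIso (f₁ ⊗ₘ g₁)] [IsIso (f₂ ⊗ₘ g₂)] :
    IsIso ((f₁ ⊗ₘ f₂) ⊗ₘ g₁ ⊗ₘ g₂) := by
  have : IsIso (((f₁ ⊗ₘ f₂) ⊗ₘ g₁ ⊗ₘ g₂) ≫ tensorμ Y₁ Y₂ V₁ V₂) := by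
    rw [tensorμ_natural]
    infer_instance
  exact IsIso.of_isIso_comp_right _ (tensorμ Y₁ Y₂ V₁ V₂)

lemma subunitMul_comm {S T : C} (s : S ⟶ 𝟙_ C) (t : T ⟶ 𝟙_ C) :
    subunitMul s t = (β_ S T).hom ≫ subunitMul t s := by
  rw [subunitMul, subunitMul, ← BraidedCategory.braiding_naturality_assoc, braiding_leftUnitor,
    unitors_equal]

lemma isIso_subunitMul_tensorHom_id {S T : C} (s : S ⟶ 𝟙_ C) (t : T ⟶ 𝟙_ C)
    [IsIso (s ⊗ₘ 𝟙 S)] [IsIso (t ⊗ₘ 𝟙 T)] : IsIso (subunitMul s t ⊗ₘ 𝟙 (S ⊗ T)) := by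
  have : IsIso ((s ⊗ₘ t) ⊗ₘ 𝟙 S ⊗ₘ 𝟙 T) := isIso_tensorHom_tensorHom s t (𝟙 S) (𝟙 T)
  rw [id_tensorHom_id, tensorHom_id] at this
  rw [tensorHom_id, subunitMul, comp_whiskerRight]
  infer_instance

lemma mono_subunitMul (firm : Firm C) {S T : C} {s : S ⟶ 𝟙_ C} {t : T ⟶ 𝟙_ C}
    (hs : IsIdemSubunit s) (ht : IsIdemSubunit t) : Mono (subunitMul s t) := by
  have : Mono (s ▷ T) := tensorHom_id s T ▸ firm s t hs.1 ht.1 hs.2 ht.2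
  have := ht.1
  rw [subunitMul_eq_whiskerRight]
  infer_instance

lemma IsIdemSubunit.subunitMul (firm : Firm C) {S T : C} {s : S ⟶ 𝟙_ C} {t : T ⟶ 𝟙_ C}
    (hs : IsIdemSubunit s) (ht : IsIdemSubunit t) : IsIdemSubunit (subunitMul s t) :=
  have := hs.2
  have := ht.2
  ⟨mono_subunitMul firm hs ht, isIso_subunitMul_tensorHom_id s t⟩

end Braided

/-- In a firm braided monoidal category, the idempotent subunits form an idempotent
commutative monoid under `⊗` (as subobjects of `I`), with unit `id_I`: the product of
idempotent subunits is an idempotent subunit, and up to equality of the represented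
subobjects the operation is associative, commutative, unital and idempotent. -/
theorem stmt4 {C : Type*} [Category C] [MonoidalCategory C] [BraidedCategory C]
    (firm : Firm C) :
    -- closure: the product of idempotent subunits is an idempotent subunit
    (∀ {S T : C} (s : S ⟶ 𝟙_ C) (t : T ⟶ 𝟙_ C),
      IsIdemSubunit s → IsIdemSubunit t → IsIdemSubunit (subunitMul s t)) ∧
    -- `id_I` is an idempotent subunit
    IsIdemSubunit (𝟙 (𝟙_ C)) ∧
    -- unit laws
    (∀ {S : C} (s : S ⟶ 𝟙_ C), IsIdemSubunit s →
      SameSub (subunitMul (𝟙 (𝟙_ C)) s) s ∧ SameSub (subunitMul s (𝟙 (𝟙_ C))) s) ∧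
    -- associativity
    (∀ {S T U : C} (s : S ⟶ 𝟙_ C) (t : T ⟶ 𝟙_ C) (u : U ⟶ 𝟙_ C),
      IsIdemSubunit s → IsIdemSubunit t → IsIdemSubunit u →
      SameSub (subunitMul (subunitMul s t) u) (subunitMul s (subunitMul t u))) ∧
    -- commutativity
    (∀ {S T : C} (s : S ⟶ 𝟙_ C) (t : T ⟶ 𝟙_ C),
      IsIdemSubunit s → IsIdemSubunit t → SameSub (subunitMul s t) (subunitMul t s)) ∧
    -- idempotence
    (∀ {S : C} (s : S ⟶ 𝟙_ C), IsIdemSubunit s → SameSub (subunitMul s s) s) :=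
  ⟨fun _ _ hs ht => hs.subunitMul firm ht,
    isIdemSubunit_id,
    fun s _ => ⟨sameSub_of_iso (λ_ _) (id_subunitMul s), sameSub_of_iso (ρ_ _) (subunitMul_id s)⟩,
    fun s t u _ _ _ => sameSub_of_iso (α_ _ _ _) (subunitMul_assoc s t u),
    fun s t _ _ => sameSub_of_iso (β_ _ _) (subunitMul_comm s t),
    fun s hs => sameSub_subunitMul_self s hs.2⟩
end

section
/- Let E be an object and s : S ↪ I an idempotent subunit in a monoidal category. The following are equivalent: (a) id_E ⊗ s : E ⊗ S → E ⊗ I is an isomorphism; (b) there exists an isomorphism E ⊗ S ≅ E; (c) there exists an object F and an isomorphism E ≅ F ⊗ S; (d) id_E factors through ρ_E ∘ (id_E ⊗ s) : E ⊗ S → E. -/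
/-!
The maps `ε_X = X ◁ s ≫ ρ_X : X ⊗ S ⟶ X` form the counit of the comonad `- ⊗ S`, and this comonad
is idempotent: `ε_X ▷ S` is invertible because `s ▷ S` is, and `ε_{X ⊗ S}` is invertible because
`S ◁ s` is (which follows from `s ▷ S` being invertible, as `s` is mono). Condition (a) says that
`ε_E` is invertible and (d) that it is a split epimorphism; for the counit of an idempotent comonad
these agree, since a section `g` satisfies `(ε_E ≫ g) ▷ S = 𝟙` and naturality transports this
along the epimorphism `ε_{E ⊗ S}`. Finally (c) gives (a) since `ε` is invertible on every `F ⊗ S`.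
-/

open CategoryTheory MonoidalCategory

namespace CategoryTheory.MonoidalCategory

variable {C : Type*} [Category C] [MonoidalCategory C]

lemma isIso_whiskerLeft_of_iso {A B E X : C} (f : A ⟶ B) (e : E ≅ X) [IsIso (X ◁ f)] :
    IsIso (E ◁ f) := by
  have : E ◁ f = e.hom ▷ A ≫ X ◁ f ≫ e.inv ▷ B := by
    rw [← whisker_exchange_assoc, ← comp_whiskerRight, Iso.hom_inv_id, id_whiskerRight,
      Category.comp_id]
  rw [this]
  infer_instance

section Subunit

variable {S : C} (s : S ⟶ 𝟙_ C)

-- Both composites agree after postcomposing with unitors and the mono `s`.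
lemma isIso_whiskerLeft_self_of_isIso_whiskerRight [Mono s] [IsIso (s ▷ S)] :
    IsIso (S ◁ s) := by
  have key : S ◁ s ≫ (ρ_ S).hom = s ▷ S ≫ (λ_ S).hom := by
    rw [← cancel_mono s, Category.assoc, Category.assoc, ← rightUnitor_naturality,
      ← leftUnitor_naturality, unitors_equal, ← Category.assoc, ← Category.assoc,
      whisker_exchange]
  have : S ◁ s = s ▷ S ≫ (λ_ S).hom ≫ (ρ_ S).inv := by
    rw [← Category.assoc, ← key]; simp
  rw [this]
  infer_instance

lemma isIso_tensor_whiskerLeft [IsIso (S ◁ s)] (X : C) : IsIso ((X ⊗ S) ◁ s) := by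
  rw [tensor_whiskerLeft]
  infer_instance

def subunitCounit (X : C) : X ⊗ S ⟶ X := X ◁ s ≫ (ρ_ X).hom

lemma subunitCounit_naturality {X Y : C} (f : X ⟶ Y) :
    f ▷ S ≫ subunitCounit s Y = subunitCounit s X ≫ f := by
  rw [subunitCounit, subunitCounit, ← whisker_exchange_assoc, rightUnitor_naturality,
    Category.assoc]

lemma isIso_subunitCounit_iff (X : C) : IsIso (subunitCounit s X) ↔ IsIso (X ◁ s) :=
  isIso_comp_right_iff (X ◁ s) (ρ_ X).hom

lemma isIso_subunitCounit_whiskerRight [IsIso (s ▷ S)] (X : C) :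
    IsIso (subunitCounit s X ▷ S) := by
  rw [subunitCounit, comp_whiskerRight, whisker_assoc]
  infer_instance

lemma isIso_subunitCounit_of_iso_tensor [IsIso (S ◁ s)] {E F : C} (e : E ≅ F ⊗ S) :
    IsIso (subunitCounit s E) := by
  have := isIso_tensor_whiskerLeft s F
  rw [isIso_subunitCounit_iff]
  exact isIso_whiskerLeft_of_iso s e

lemma isIso_subunitCounit_of_comp_eq_id [IsIso (s ▷ S)] [IsIso (S ◁ s)] {X : C}
    (g : X ⟶ X ⊗ S) (hg : g ≫ subunitCounit s X = 𝟙 X) : IsIso (subunitCounit s X) := by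
  have hgS : subunitCounit s X ▷ S ≫ g ▷ S = 𝟙 _ := by
    have := isIso_subunitCounit_whiskerRight s X
    rw [← cancel_mono (subunitCounit s X ▷ S), Category.assoc, ← comp_whiskerRight, hg,
      id_whiskerRight, Category.comp_id, Category.id_comp]
  have := isIso_subunitCounit_of_iso_tensor s (Iso.refl (X ⊗ S))
  refine ⟨g, ?_, hg⟩
  rw [← cancel_epi (subunitCounit s (X ⊗ S)), Category.comp_id,
    ← subunitCounit_naturality, comp_whiskerRight, hgS, Category.id_comp]

end Subunit

end CategoryTheory.MonoidalCategory

/-- Proposition: for an object `E` and idempotent subunit `s : S ↪ I`, the following are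
equivalent: (a) `id_E ⊗ s` is an isomorphism; (b) `E ⊗ S ≅ E`; (c) `E ≅ F ⊗ S` for some
`F`; (d) `id_E` has support in `s`, i.e. factors through `ρ_E ∘ (id_E ⊗ s)`. -/
theorem stmt11 {C : Type*} [Category C] [MonoidalCategory C]
    {S : C} (s : S ⟶ 𝟙_ C) [Mono s] (hs : IsIso (s ⊗ₘ 𝟙 S)) (E : C) :
    List.TFAE
      [IsIso (𝟙 E ⊗ₘ s),
       Nonempty (E ⊗ S ≅ E),
       ∃ F : C, Nonempty (E ≅ F ⊗ S),
       ∃ g : E ⟶ E ⊗ S, g ≫ (𝟙 E ⊗ₘ s) ≫ (ρ_ E).hom = 𝟙 E] := by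
  rw [tensorHom_id] at hs
  have := isIso_whiskerLeft_self_of_isIso_whiskerRight s
  rw [id_tensorHom, ← isIso_subunitCounit_iff]
  tfae_have 1 → 2 := fun _ => ⟨asIso (subunitCounit s E)⟩
  tfae_have 2 → 3 := fun ⟨e⟩ => ⟨E, ⟨e.symm⟩⟩
  tfae_have 3 → 1 := fun ⟨_, ⟨e⟩⟩ => isIso_subunitCounit_of_iso_tensor s e
  tfae_have 1 → 4 := fun _ => ⟨inv (subunitCounit s E), IsIso.inv_hom_id _⟩
  tfae_have 4 → 1 := fun ⟨g, hg⟩ => isIso_subunitCounit_of_comp_eq_id s g hg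
  tfae_finish
end
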